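/- Suppose the pair (x, y) solves the traffic equilibrium complementarity problem for the network (V, A) with cost function c and demand vector d, and suppose the cost function is strictly positive, i.e., c_{(i,j)}(x') > 0 for every arc (i,j) ∈ A and every componentwise-nonnegative flow vector x' : A → ℝ. Then at every node i ∈ V with nonpositive demand d_i ≤ 0, conservation of flow holds with equality: (Nx)_i = d_i, i.e., the inflow at node i minus the outflow at node i equals d_i. -/
import Mathlib


/-- Net inflow at node `i`: inflow minus outflow, i.e. the node-arc incidence
matrix `N` applied to the flow vector `x : A → ℝ`. -/
def netInflow {V : Type*} [Fintype V] [DecidableEq V] (A : Finset (V × V))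
    (x : A → ℝ) (i : V) : ℝ :=
  (∑ a : A, if (a : V × V).2 = i then x a else 0) -
  (∑ a : A, if (a : V × V).1 = i then x a else 0)

/-- If `(x, y)` solves the traffic equilibrium complementarity problem and the
cost function is strictly positive on componentwise-nonnegative flows, then at
every node `i` with nonpositive demand `d i ≤ 0`, conservation of flow holds
with equality: `(N x) i = d i`. -/
theorem conservation_at_nonpositive_demand
    {V : Type*} [Fintype V] [DecidableEq V] (A : Finset (V × V))
    (c : (A → ℝ) → A → ℝ) (d : V → ℝ) (x : A → ℝ) (y : V → ℝ)
    -- strict positivity of the cost function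
    (hpos : ∀ x' : A → ℝ, (∀ a, 0 ≤ x' a) → ∀ a, 0 < c x' a)
    -- (x, y) solves the complementarity problem
    (hx : ∀ a, 0 ≤ x a)
    (hcost : ∀ a : A, 0 ≤ c x a + y (a : V × V).2 - y (a : V × V).1)
    (hxcomp : ∀ a : A, x a * (c x a + y (a : V × V).2 - y (a : V × V).1) = 0)
    (hy : ∀ i, 0 ≤ y i)
    (hd : ∀ i, 0 ≤ d i - netInflow A x i)
    (hycomp : ∀ i, y i * (d i - netInflow A x i) = 0) :
    ∀ i : V, d i ≤ 0 → netInflow A x i = d i := by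
  intro i hdi
  by_contra hne
  have hslack : 0 < d i - netInflow A x i := lt_of_le_of_ne (hd i) (by
    intro h
    exact hne (by linarith))
  -- complementarity forces y i = 0
  have hyi : y i = 0 := by
    have := hycomp i
    rcases mul_eq_zero.mp this with h | h
    · exact h
    · exact absurd h (ne_of_gt hslack)
  -- netInflow i < d i ≤ 0, inflow sum is nonneg, so outflow sum > 0
  have hin : 0 ≤ ∑ a : A, if (a : V × V).2 = i then x a else 0 :=
    Finset.sum_nonneg fun a _ => by split <;> simp [hx a]
  have hout : 0 < ∑ a : A, if (a : V × V).1 = i then x a else 0 := by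
    have hN : netInflow A x i < 0 := by linarith
    unfold netInflow at hN
    linarith
  obtain ⟨a, -, ha⟩ := Finset.exists_lt_of_sum_lt (f := fun _ : A => (0:ℝ))
    (by simpa using hout)
  have ha1 : (a : V × V).1 = i := by by_contra h; simp [h] at ha
  have hxa : 0 < x a := by simpa [ha1] using ha
  have := hxcomp a
  rcases mul_eq_zero.mp this with h | h
  · exact absurd h (ne_of_gt hxa)
  · have hc := hpos x hx a
    have := hy (a : V × V).2
    rw [ha1, hyi] at h
    linarith
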